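/- arXiv:2212.14072 — 5 statements merged into one kernel-verified Lean document; each statement's English description precedes it below -/
import Mathlib

section
/- Let (A, M, {R_α}_{α∈Ω}) be a relative Rota-Baxter family algebra. Define operations on M by u ≺_α v := u·R_α(v) and u ≻_α v := R_α(u)·v for u, v ∈ M and α ∈ Ω. Then (M, {≺_α, ≻_α}_{α∈Ω}) is a dendriform family algebra; that is, for all u, v, w ∈ M and α, β ∈ Ω: (u ≺_α v) ≺_β w = u ≺_{αβ} (v ≺_β w + v ≻_α w), (u ≻_α v) ≺_β w = u ≻_α (v ≺_β w), and (u ≺_β v + u ≻_α v) ≻_{αβ} w = u ≻_α (v ≻_β w). -/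
/- STATEMENT 0: A relative Rota-Baxter family algebra induces a dendriform
family algebra structure on the bimodule `M` via
`u ≺_α v := u · R_α(v)` and `u ≻_α v := R_α(u) · v`. -/

theorem relative_RotaBaxter_family_induces_dendriform_family
    {k : Type*} [Field k] [CharZero k]
    {Ω : Type*} [Semigroup Ω]
    {A : Type*} [NonUnitalRing A] [Module k A] [SMulCommClass k A A] [IsScalarTower k A A]
    {M : Type*} [AddCommGroup M] [Module k M]
    -- the `A`-bimodule structure on `M`, given by bilinear (k-linear) actions
    (lact : A →ₗ[k] M →ₗ[k] M) (ract : M →ₗ[k] A →ₗ[k] M)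
    (hlact : ∀ (a b : A) (u : M), lact (a * b) u = lact a (lact b u))
    (hmid : ∀ (a : A) (u : M) (b : A), ract (lact a u) b = lact a (ract u b))
    (hract : ∀ (u : M) (a b : A), ract (ract u a) b = ract u (a * b))
    -- the family of relative Rota-Baxter operators
    (R : Ω → M →ₗ[k] A)
    (hRB : ∀ (α β : Ω) (u v : M),
      R α u * R β v = R (α * β) (lact (R α u) v + ract u (R β v))) :
    ∀ (u v w : M) (α β : Ω),
      -- (u ≺_α v) ≺_β w = u ≺_{αβ} (v ≺_β w + v ≻_α w)
      (ract (ract u (R α v)) (R β w)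
          = ract u (R (α * β) (ract v (R β w) + lact (R α v) w))) ∧
      -- (u ≻_α v) ≺_β w = u ≻_α (v ≺_β w)
      (ract (lact (R α u) v) (R β w) = lact (R α u) (ract v (R β w))) ∧
      -- (u ≺_β v + u ≻_α v) ≻_{αβ} w = u ≻_α (v ≻_β w)
      (lact (R (α * β) (ract u (R β v) + lact (R α u) v)) w
          = lact (R α u) (lact (R β v) w)) := by
  intro u v w α β
  refine ⟨?_, hmid _ _ _, ?_⟩
  · rw [hract, hRB, add_comm]
  · rw [add_comm, ← hRB, hlact]
end

section
/- Let (D, {≺_α, ≻_α}_{α∈Ω}) be a dendriform family algebra. On the space Ω →₀ D of finitely supported functions from Ω to D (realizing D ⊗ kΩ), define f ≺ g := Σ_{α,β∈Ω} single(αβ)(f(α) ≺_β g(β)) and f ≻ g := Σ_{α,β∈Ω} single(αβ)(f(α) ≻_α g(β)), where single(γ)(x) denotes the function supported at γ with value x and the sums range over the (finite) supports of f and g. Then (Ω →₀ D, ≺, ≻) is a dendriform algebra; that is, for all f, g, h: (f ≺ g) ≺ h = f ≺ (g ≺ h + g ≻ h), (f ≻ g) ≺ h = f ≻ (g ≺ h),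 and (f ≺ g + f ≻ g) ≻ h = f ≻ (g ≻ h). -/
/- STATEMENT 1: If `(D, {≺_α, ≻_α})` is a dendriform family algebra, then
`Ω →₀ D` (realizing `D ⊗ kΩ`) with
`f ≺ g = Σ single (α β) (f α ≺_β g β)` and `f ≻ g = Σ single (α β) (f α ≻_α g β)`
is a dendriform algebra. -/

variable {k : Type*} [Field k] [CharZero k]
variable {Ω : Type*} [Semigroup Ω]
variable {D : Type*} [AddCommGroup D] [Module k D]

/-- `f ≺ g := Σ_{α,β} single (αβ) (f α ≺_β g β)`. -/
noncomputable def famPrec (prec : Ω → D →ₗ[k] D →ₗ[k] D) (f g : Ω →₀ D) : Ω →₀ D :=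
  f.sum fun α x => g.sum fun β y => Finsupp.single (α * β) (prec β x y)

/-- `f ≻ g := Σ_{α,β} single (αβ) (f α ≻_α g β)`. -/
noncomputable def famSucc (succ : Ω → D →ₗ[k] D →ₗ[k] D) (f g : Ω →₀ D) : Ω →₀ D :=
  f.sum fun α x => g.sum fun β y => Finsupp.single (α * β) (succ α x y)

/-- Auxiliary: unified form of the two operations. -/
noncomputable def fam (F : Ω → Ω → D →ₗ[k] D →ₗ[k] D) (f g : Ω →₀ D) : Ω →₀ D :=
  f.sum fun α x => g.sum fun β y => Finsupp.single (α * β) (F α β x y)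

lemma famPrec_eq_fam (prec : Ω → D →ₗ[k] D →ₗ[k] D) :
    famPrec prec = fam (fun _ β => prec β) := rfl

lemma famSucc_eq_fam (succ : Ω → D →ₗ[k] D →ₗ[k] D) :
    famSucc succ = fam (fun α _ => succ α) := rfl

lemma fam_zero_left (F : Ω → Ω → D →ₗ[k] D →ₗ[k] D) (g : Ω →₀ D) : fam F 0 g = 0 := by
  simp [fam]

lemma fam_zero_right (F : Ω → Ω → D →ₗ[k] D →ₗ[k] D) (f : Ω →₀ D) : fam F f 0 = 0 := by
  simp [fam]

lemma fam_add_left (F : Ω → Ω → D →ₗ[k] D →ₗ[k] D) (f f' g : Ω →₀ D) :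
    fam F (f + f') g = fam F f g + fam F f' g := by
  unfold fam
  rw [Finsupp.sum_add_index']
  · intro α; simp
  · intro α x x'
    rw [← Finsupp.sum_add]
    congr 1; ext β y
    simp [Finsupp.single_add]

lemma fam_add_right (F : Ω → Ω → D →ₗ[k] D →ₗ[k] D) (f g g' : Ω →₀ D) :
    fam F f (g + g') = fam F f g + fam F f g' := by
  unfold fam
  rw [← Finsupp.sum_add]
  congr 1; ext α x
  rw [Finsupp.sum_add_index']
  · intro β; simp
  · intro β y y'; simp [Finsupp.single_add]

lemma fam_single_single (F : Ω → Ω → D →ₗ[k] D →ₗ[k] D) (α β : Ω) (x y : D) :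
    fam F (Finsupp.single α x) (Finsupp.single β y)
      = Finsupp.single (α * β) (F α β x y) := by
  unfold fam
  rw [Finsupp.sum_single_index, Finsupp.sum_single_index]
  · simp
  · simp

theorem dendriform_family_to_dendriform
    (prec succ : Ω → D →ₗ[k] D →ₗ[k] D)
    -- dendriform family algebra axioms: `prec α x y = x ≺_α y`, `succ α x y = x ≻_α y`
    (hd1 : ∀ (α β : Ω) (x y z : D),
      prec β (prec α x y) z = prec (α * β) x (prec β y z + succ α y z))
    (hd2 : ∀ (α β : Ω) (x y z : D),
      prec β (succ α x y) z = succ α x (prec β y z))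
    (hd3 : ∀ (α β : Ω) (x y z : D),
      succ (α * β) (prec β x y + succ α x y) z = succ α x (succ β y z)) :
    ∀ f g h : Ω →₀ D,
      (famPrec prec (famPrec prec f g) h
        = famPrec prec f (famPrec prec g h + famSucc succ g h)) ∧
      (famPrec prec (famSucc succ f g) h = famSucc succ f (famPrec prec g h)) ∧
      (famSucc succ (famPrec prec f g + famSucc succ f g) h
        = famSucc succ f (famSucc succ g h)) := by
  simp only [famPrec_eq_fam, famSucc_eq_fam]
  set P : Ω → Ω → D →ₗ[k] D →ₗ[k] D := fun _ β => prec β with hP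
  set S : Ω → Ω → D →ₗ[k] D →ₗ[k] D := fun α _ => succ α with hS
  intro f g h
  refine ⟨?_, ?_, ?_⟩
  · induction f using Finsupp.induction_linear with
    | zero => simp [fam_zero_left]
    | add f f' hf hf' =>
      calc fam P (fam P (f + f') g) h
          = fam P (fam P f g) h + fam P (fam P f' g) h := by
            simp only [fam_add_left, fam_add_right]
        _ = fam P f (fam P g h + fam S g h) + fam P f' (fam P g h + fam S g h) := by
            rw [hf, hf']
        _ = fam P (f + f') (fam P g h + fam S g h) := (fam_add_left _ _ _ _).symm
    | single a b =>
      induction g using Finsupp.induction_linear with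
      | zero => simp [fam_zero_left, fam_zero_right]
      | add g g' hg hg' =>
        calc fam P (fam P (fun₀ | a => b) (g + g')) h
            = fam P (fam P (fun₀ | a => b) g) h + fam P (fam P (fun₀ | a => b) g') h := by
              simp only [fam_add_left, fam_add_right]
          _ = fam P (fun₀ | a => b) (fam P g h + fam S g h)
              + fam P (fun₀ | a => b) (fam P g' h + fam S g' h) := by rw [hg, hg']
          _ = fam P (fun₀ | a => b) (fam P (g + g') h + fam S (g + g') h) := by
              simp only [fam_add_left, fam_add_right]; abel
      | single c d =>
        induction h using Finsupp.induction_linear with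
        | zero => simp [fam_zero_right]
        | add h h' hh hh' =>
          calc fam P (fam P (fun₀ | a => b) (fun₀ | c => d)) (h + h')
              = fam P (fam P (fun₀ | a => b) (fun₀ | c => d)) h
                + fam P (fam P (fun₀ | a => b) (fun₀ | c => d)) h' := by
                simp only [fam_add_right]
            _ = fam P (fun₀ | a => b) (fam P (fun₀ | c => d) h + fam S (fun₀ | c => d) h)
                + fam P (fun₀ | a => b) (fam P (fun₀ | c => d) h' + fam S (fun₀ | c => d) h') := by
                rw [hh, hh']
            _ = fam P (fun₀ | a => b)
                  (fam P (fun₀ | c => d) (h + h') + fam S (fun₀ | c => d) (h + h')) := by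
                simp only [fam_add_left, fam_add_right]; abel
        | single e x =>
          rw [fam_single_single, fam_single_single, fam_single_single,
            fam_single_single, ← Finsupp.single_add, fam_single_single]
          rw [mul_assoc]
          congr 1
          exact hd1 c e b d x
  · induction f using Finsupp.induction_linear with
    | zero => simp [fam_zero_left]
    | add f f' hf hf' => simp [fam_add_left, hf, hf']
    | single a b =>
      induction g using Finsupp.induction_linear with
      | zero => simp [fam_zero_left, fam_zero_right]
      | add g g' hg hg' => simp [fam_add_left, fam_add_right, hg, hg']
      | single c d =>
        induction h using Finsupp.induction_linear with
        | zero => simp [fam_zero_right]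
        | add h h' hh hh' => simp [fam_add_right, hh, hh']
        | single e x =>
          rw [fam_single_single, fam_single_single, fam_single_single,
            fam_single_single, mul_assoc]
          congr 1
          exact hd2 a e b d x
  · induction f using Finsupp.induction_linear with
    | zero => simp [fam_zero_left]
    | add f f' hf hf' =>
      calc fam S (fam P (f + f') g + fam S (f + f') g) h
          = fam S (fam P f g + fam S f g) h + fam S (fam P f' g + fam S f' g) h := by
            simp only [fam_add_left]; abel
        _ = fam S f (fam S g h) + fam S f' (fam S g h) := by rw [hf, hf']
        _ = fam S (f + f') (fam S g h) := (fam_add_left _ _ _ _).symm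
    | single a b =>
      induction g using Finsupp.induction_linear with
      | zero => simp [fam_zero_left, fam_zero_right]
      | add g g' hg hg' =>
        calc fam S (fam P (fun₀ | a => b) (g + g') + fam S (fun₀ | a => b) (g + g')) h
            = fam S (fam P (fun₀ | a => b) g + fam S (fun₀ | a => b) g) h
              + fam S (fam P (fun₀ | a => b) g' + fam S (fun₀ | a => b) g') h := by
              simp only [fam_add_left, fam_add_right]; abel
          _ = fam S (fun₀ | a => b) (fam S g h) + fam S (fun₀ | a => b) (fam S g' h) := by
              rw [hg, hg']
          _ = fam S (fun₀ | a => b) (fam S (g + g') h) := by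
              simp only [fam_add_left, fam_add_right]
      | single c d =>
        induction h using Finsupp.induction_linear with
        | zero => simp [fam_zero_right]
        | add h h' hh hh' =>
          calc fam S (fam P (fun₀ | a => b) (fun₀ | c => d)
                + fam S (fun₀ | a => b) (fun₀ | c => d)) (h + h')
              = fam S (fam P (fun₀ | a => b) (fun₀ | c => d)
                  + fam S (fun₀ | a => b) (fun₀ | c => d)) h
                + fam S (fam P (fun₀ | a => b) (fun₀ | c => d)
                  + fam S (fun₀ | a => b) (fun₀ | c => d)) h' := by
                simp only [fam_add_right]
            _ = fam S (fun₀ | a => b) (fam S (fun₀ | c => d) h)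
                + fam S (fun₀ | a => b) (fam S (fun₀ | c => d) h') := by rw [hh, hh']
            _ = fam S (fun₀ | a => b) (fam S (fun₀ | c => d) (h + h')) := by
                simp only [fam_add_right]
        | single e x =>
          rw [fam_single_single, fam_single_single, ← Finsupp.single_add,
            fam_single_single, fam_single_single, fam_single_single, mul_assoc]
          congr 1
          exact hd3 a c b d x
end

section
/- Let V be a k-vector space and Ω a semigroup. The Ω-Gerstenhaber bracket makes ⊕_{n≥1} Hom_Ω(V^{⊗n}, V) a graded Lie algebra where an element of Hom_Ω(V^{⊗n}, V) has degree n−1. That is, for f ∈ Hom_Ω(V^{⊗m}, V), g ∈ Hom_Ω(V^{⊗n}, V), h ∈ Hom_Ω(V^{⊗p}, V): (graded antisymmetry) [f, g]_Ω = −(−1)^{(m−1)(n−1)} [g, f]_Ω; and (graded Jacobi identity) (−1)^{(m−1)(p−1)} [[f, g]_Ω, h]_Ω + (−1)^{(n−1)(m−1)} [[g, h]_Ω, f]_Ω + (−1)^{(p−1)(n−1)} [[h, f]_Ω, g]_Ω = 0. -/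
variable {k : Type*} [Field k] [CharZero k]
variable {Ω : Type*} [Semigroup Ω]

/-- Replace the block of `n` consecutive entries of `v` starting at position `i`
(0-indexed) by the single entry `x`. -/
def collapseAt {X : Type*} (v : ℕ → X) (i n : ℕ) (x : X) : ℕ → X :=
  fun j => if j < i then v j else if j = i then x else v (j + n - 1)

/-- `prodSeg α i n = α i * α (i+1) * ⋯ * α (i+n)`, the product of `n+1`
consecutive labels in the semigroup `Ω`. -/
def prodSeg {Ω : Type*} [Mul Ω] (α : ℕ → Ω) : ℕ → ℕ → Ω
  | i, 0 => α i
  | i, n + 1 => α i * prodSeg α (i + 1) n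

/-- The partial composition `f ∘ᵢ g` (at the 0-indexed position `i`) of a
collection `f` with a collection `g` of `n`-ary maps; a collection of
`(m+n-1)`-ary maps indexed by `Ω^(m+n-1)` is encoded as a function of infinite
sequences of labels and of arguments, using only the first `m+n-1` entries. -/
def pcompF {Ω V : Type*} [Mul Ω] (n : ℕ) (f g : (ℕ → Ω) → (ℕ → V) → V) (i : ℕ) :
    (ℕ → Ω) → (ℕ → V) → V :=
  fun α v =>
    f (collapseAt α i n (prodSeg α i (n - 1)))
      (collapseAt v i n (g (fun t => α (i + t)) (fun t => v (i + t))))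

/-- `f` is (an encoding of) a collection, indexed by `Ω^n`, of `n`-multilinear
maps `V^{⊗ n} → W`: it depends only on the first `n` labels and the first `n`
arguments, and it is `k`-linear in each of the first `n` argument slots. -/
def IsFamMulti (k : Type*) [Field k] {Ω V W : Type*}
    [AddCommGroup V] [Module k V] [AddCommGroup W] [Module k W]
    (n : ℕ) (f : (ℕ → Ω) → (ℕ → V) → W) : Prop :=
  (∀ (α α' : ℕ → Ω) (v v' : ℕ → V),
      (∀ t, t < n → α t = α' t) → (∀ t, t < n → v t = v' t) → f α v = f α' v') ∧
  (∀ (α : ℕ → Ω) (v : ℕ → V) (t : ℕ), t < n → ∀ x y : V,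
      f α (Function.update v t (x + y))
        = f α (Function.update v t x) + f α (Function.update v t y)) ∧
  (∀ (α : ℕ → Ω) (v : ℕ → V) (t : ℕ), t < n → ∀ (c : k) (x : V),
      f α (Function.update v t (c • x)) = c • f α (Function.update v t x))

/-- The Ω-Gerstenhaber bracket `[f,g]_Ω` of a collection `f` of `m`-ary maps
and a collection `g` of `n`-ary maps (0-indexed positions, so the 1-indexed
sign `(-1)^{(i-1)(n-1)}` becomes `(-1)^{i(n-1)}`). -/
noncomputable def gBracketF {Ω V : Type*} [Mul Ω] [AddCommGroup V]
    (m n : ℕ) (f g : (ℕ → Ω) → (ℕ → V) → V) : (ℕ → Ω) → (ℕ → V) → V :=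
  fun α v =>
    (∑ i ∈ Finset.range m, ((-1 : ℤ) ^ (i * (n - 1))) • pcompF n f g i α v)
      - ((-1 : ℤ) ^ ((m - 1) * (n - 1))) •
          ∑ i ∈ Finset.range n, ((-1 : ℤ) ^ (i * (m - 1))) • pcompF m g f i α v

/- STATEMENT 6: the Ω-Gerstenhaber bracket makes `⊕_{n ≥ 1} Hom_Ω(V^{⊗n}, V)`
a graded Lie algebra, an element of `Hom_Ω(V^{⊗n}, V)` having degree `n-1`:
graded antisymmetry and the graded Jacobi identity hold. -/

set_option linter.unusedSectionVars false

section Basic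
variable {X : Type*}

lemma collapseAt_apply_lt {v : ℕ → X} {i j : ℕ} (n : ℕ) (x : X) (h : j < i) :
    collapseAt v i n x j = v j := by simp [collapseAt, h]

lemma collapseAt_apply_self {v : ℕ → X} {i : ℕ} (n : ℕ) (x : X) :
    collapseAt v i n x i = x := by simp [collapseAt]

lemma collapseAt_apply_gt {v : ℕ → X} {i j : ℕ} (n : ℕ) (x : X) (h : i < j) :
    collapseAt v i n x j = v (j + n - 1) := by
  have h1 : ¬ j < i := by omega
  have h2 : j ≠ i := by omega
  simp [collapseAt, h1, h2]

lemma prodSeg_zero (α : ℕ → Ω) (i : ℕ) : prodSeg α i 0 = α i := rfl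

lemma prodSeg_succ (α : ℕ → Ω) (i d : ℕ) :
    prodSeg α i (d + 1) = α i * prodSeg α (i + 1) d := rfl

lemma prodSeg_congr {α β : ℕ → Ω} {a c : ℕ} (d : ℕ)
    (h : ∀ t, t ≤ d → α (a + t) = β (c + t)) : prodSeg α a d = prodSeg β c d := by
  induction d generalizing a c with
  | zero => simpa [prodSeg_zero] using h 0 le_rfl
  | succ d ih =>
      rw [prodSeg_succ, prodSeg_succ]
      have h0 := h 0 (by omega)
      simp only [Nat.add_zero] at h0
      rw [h0, ih (fun t ht => by
        have h1 := h (t + 1) (by omega)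
        rw [show a + (t + 1) = a + 1 + t by omega, show c + (t + 1) = c + 1 + t by omega] at h1
        exact h1)]

lemma prodSeg_split (α : ℕ → Ω) (a d e : ℕ) :
    prodSeg α a (d + 1 + e) = prodSeg α a d * prodSeg α (a + d + 1) e := by
  induction d generalizing a with
  | zero =>
      rw [prodSeg_zero, show 0 + 1 + e = e + 1 by omega, prodSeg_succ,
        show a + 0 + 1 = a + 1 by omega]
  | succ d ih =>
      rw [show d + 1 + 1 + e = (d + 1 + e) + 1 by omega, prodSeg_succ, ih (a + 1),
        prodSeg_succ, mul_assoc, show a + 1 + d + 1 = a + (d + 1) + 1 by omega]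

lemma prodSeg_collapse (α : ℕ → Ω) (p' i d e : ℕ) (hed : e ≤ d) :
    prodSeg (collapseAt α (i + e) (p' + 1) (prodSeg α (i + e) p')) i d
      = prodSeg α i (d + p') := by
  induction d generalizing i e with
  | zero =>
      have he : e = 0 := by omega
      subst he
      rw [prodSeg_zero, show i + 0 = i from rfl, collapseAt_apply_self, Nat.zero_add]
  | succ d ih =>
      rcases Nat.eq_zero_or_pos e with he | he
      · subst he
        rw [prodSeg_succ, show i + 0 = i from rfl, collapseAt_apply_self]
        have hrest : prodSeg (collapseAt α i (p' + 1) (prodSeg α i p')) (i + 1) d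
            = prodSeg α (i + 1 + p') d := by
          refine prodSeg_congr d (fun t ht => ?_)
          rw [collapseAt_apply_gt _ _ (by omega)]
          congr 1; omega
        rw [hrest, show i + 1 + p' = i + p' + 1 by omega, ← prodSeg_split α i p' d]
        congr 1; omega
      · obtain ⟨e', rfl⟩ : ∃ e', e = e' + 1 := ⟨e - 1, by omega⟩
        rw [prodSeg_succ, collapseAt_apply_lt _ _ (by omega)]
        have h2 : prodSeg (collapseAt α (i + (e' + 1)) (p' + 1) (prodSeg α (i + (e' + 1)) p')) (i + 1) d
            = prodSeg α (i + 1) (d + p') := by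
          have := ih (i + 1) e' (by omega)
          rw [show i + 1 + e' = i + (e' + 1) by omega] at this
          exact this
        rw [h2, show d + 1 + p' = (d + p') + 1 by omega, prodSeg_succ]

end Basic

section Collapse
variable {X : Type*}

lemma collapse_nested (w : ℕ → X) (i e n' p' : ℕ) (he : e ≤ n') (x y : X) :
    collapseAt (collapseAt w (i + e) (p' + 1) x) i (n' + 1) y
      = collapseAt w i (n' + 1 + p') y := by
  funext t
  rcases lt_trichotomy t i with h | h | h
  · rw [collapseAt_apply_lt _ _ h, collapseAt_apply_lt _ _ (by omega), collapseAt_apply_lt _ _ h]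
  · subst h
    rw [collapseAt_apply_self, collapseAt_apply_self]
  · rw [collapseAt_apply_gt _ _ h, collapseAt_apply_gt _ _ h,
      collapseAt_apply_gt _ _ (show i + e < t + (n' + 1) - 1 by omega)]
    congr 1; omega

lemma collapse_parallel (w : ℕ → X) (i n' p' c : ℕ) (x y : X) :
    collapseAt (collapseAt w (i + n' + 1 + c) (p' + 1) x) i (n' + 1) y
      = collapseAt (collapseAt w i (n' + 1) y) (i + c + 1) (p' + 1) x := by
  funext t
  rcases lt_trichotomy t i with h1 | h1 | h1
  · rw [collapseAt_apply_lt _ _ h1, collapseAt_apply_lt _ _ (show t < i + n' + 1 + c by omega),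
      collapseAt_apply_lt _ _ (show t < i + c + 1 by omega), collapseAt_apply_lt _ _ h1]
  · subst h1
    rw [collapseAt_apply_self, collapseAt_apply_lt _ _ (show t < t + c + 1 by omega),
      collapseAt_apply_self]
  · rw [collapseAt_apply_gt _ _ h1]
    rcases lt_trichotomy t (i + c + 1) with h2 | h2 | h2
    · rw [collapseAt_apply_lt _ _ (show t + (n' + 1) - 1 < i + n' + 1 + c by omega),
        collapseAt_apply_lt _ _ h2, collapseAt_apply_gt _ _ h1]
    · subst h2
      rw [show i + c + 1 + (n' + 1) - 1 = i + n' + 1 + c by omega, collapseAt_apply_self,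
        collapseAt_apply_self]
    · rw [collapseAt_apply_gt _ _ (show i + n' + 1 + c < t + (n' + 1) - 1 by omega),
        collapseAt_apply_gt _ _ h2, collapseAt_apply_gt _ _ (show i < t + (p' + 1) - 1 by omega)]
      congr 1; omega

lemma shift_collapse (w : ℕ → X) (i e p : ℕ) (x : X) :
    (fun t => collapseAt w (i + e) p x (i + t)) = collapseAt (fun t => w (i + t)) e p x := by
  funext t
  rcases lt_trichotomy t e with h | h | h
  · rw [collapseAt_apply_lt _ _ (show i + t < i + e by omega), collapseAt_apply_lt _ _ h]
  · subst h
    rw [collapseAt_apply_self, collapseAt_apply_self]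
  · rw [collapseAt_apply_gt _ _ (show i + e < i + t by omega), collapseAt_apply_gt _ _ h]
    congr 1; omega

end Collapse

section PComp
variable {V : Type*}

lemma pcomp_nested (f g h : (ℕ → Ω) → (ℕ → V) → V) (i e n' p' : ℕ) (he : e ≤ n')
    (α : ℕ → Ω) (v : ℕ → V) :
    pcompF (p' + 1) (pcompF (n' + 1) f g i) h (i + e) α v
      = pcompF (n' + 1 + p') f (pcompF (p' + 1) g h e) i α v := by
  simp only [pcompF, Nat.add_sub_cancel, show n' + 1 + p' - 1 = n' + p' by omega]
  have hα : (fun t => α (i + (e + t))) = (fun t => α (i + e + t)) := by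
    funext t; congr 1; omega
  have hv : (fun t => v (i + (e + t))) = (fun t => v (i + e + t)) := by
    funext t; congr 1; omega
  have hP : prodSeg (fun t => α (i + t)) e p' = prodSeg α (i + e) p' :=
    prodSeg_congr p' (fun t ht => by show α (i + (e + t)) = α (i + e + t); congr 1; omega)
  rw [hα, hv, hP, ← shift_collapse α i e (p' + 1) (prodSeg α (i + e) p'),
    ← shift_collapse v i e (p' + 1)
      (h (fun t => α (i + e + t)) (fun t => v (i + e + t))),
    prodSeg_collapse α p' i n' e he,
    collapse_nested α i e n' p' he,
    collapse_nested v i e n' p' he]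

lemma pcomp_parallel (f g h : (ℕ → Ω) → (ℕ → V) → V) (i n' p' c : ℕ)
    (hg1 : ∀ (α α' : ℕ → Ω) (v v' : ℕ → V), (∀ t, t < n' + 1 → α t = α' t) →
      (∀ t, t < n' + 1 → v t = v' t) → g α v = g α' v')
    (α : ℕ → Ω) (v : ℕ → V) :
    pcompF (p' + 1) (pcompF (n' + 1) f g i) h (i + n' + 1 + c) α v
      = pcompF (n' + 1) (pcompF (p' + 1) f h (i + c + 1)) g i α v := by
  simp only [pcompF, Nat.add_sub_cancel]
  have hQ2 : prodSeg (collapseAt α (i + n' + 1 + c) (p' + 1) (prodSeg α (i + n' + 1 + c) p')) i n'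
      = prodSeg α i n' :=
    prodSeg_congr n' (fun t ht => by
      rw [collapseAt_apply_lt _ _ (show i + t < i + n' + 1 + c by omega)])
  have hG : g (fun t => collapseAt α (i + n' + 1 + c) (p' + 1) (prodSeg α (i + n' + 1 + c) p') (i + t))
        (fun t => collapseAt v (i + n' + 1 + c) (p' + 1)
          (h (fun t => α (i + n' + 1 + c + t)) (fun t => v (i + n' + 1 + c + t))) (i + t))
      = g (fun t => α (i + t)) (fun t => v (i + t)) := by
    refine hg1 _ _ _ _ (fun t ht => ?_) (fun t ht => ?_)
    · rw [collapseAt_apply_lt _ _ (show i + t < i + n' + 1 + c by omega)]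
    · rw [collapseAt_apply_lt _ _ (show i + t < i + n' + 1 + c by omega)]
  have hT : prodSeg (collapseAt α i (n' + 1) (prodSeg α i n')) (i + c + 1) p'
      = prodSeg α (i + n' + 1 + c) p' :=
    prodSeg_congr p' (fun t ht => by
      rw [collapseAt_apply_gt _ _ (show i < i + c + 1 + t by omega)]
      congr 1; omega)
  have hX1 : (fun t => collapseAt α i (n' + 1) (prodSeg α i n') (i + c + 1 + t))
      = (fun t => α (i + n' + 1 + c + t)) := by
    funext t
    rw [collapseAt_apply_gt _ _ (show i < i + c + 1 + t by omega)]
    congr 1; omega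
  have hX2 : (fun t => collapseAt v i (n' + 1) (g (fun t => α (i + t)) (fun t => v (i + t))) (i + c + 1 + t))
      = (fun t => v (i + n' + 1 + c + t)) := by
    funext t
    rw [collapseAt_apply_gt _ _ (show i < i + c + 1 + t by omega)]
    congr 1; omega
  rw [hQ2, hG, hT, hX1, hX2, collapse_parallel α i n' p' c, collapse_parallel v i n' p' c]

end PComp

set_option linter.unusedSectionVars false

section Alg
variable {V : Type*} [AddCommGroup V]

noncomputable def circF (m n : ℕ) (f g : (ℕ → Ω) → (ℕ → V) → V) :
    (ℕ → Ω) → (ℕ → V) → V :=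
  fun α v => ∑ i ∈ Finset.range m, ((-1 : ℤ) ^ (i * (n - 1))) • pcompF n f g i α v

lemma gBracket_eq (m n : ℕ) (f g : (ℕ → Ω) → (ℕ → V) → V) (α : ℕ → Ω) (v : ℕ → V) :
    gBracketF m n f g α v
      = circF m n f g α v - ((-1 : ℤ) ^ ((m - 1) * (n - 1))) • circF n m g f α v := rfl

lemma gBracket_fun_eq (m n : ℕ) (f g : (ℕ → Ω) → (ℕ → V) → V) :
    gBracketF m n f g
      = fun α v => circF m n f g α v - ((-1 : ℤ) ^ ((m - 1) * (n - 1))) • circF n m g f α v := rfl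

lemma collapseAt_eq_update (v : ℕ → V) (i N : ℕ) (x : V) :
    collapseAt v i N x
      = Function.update (fun j => if j < i then v j else v (j + N - 1)) i x := by
  funext t
  simp only [collapseAt, Function.update_apply]
  split_ifs <;> first | rfl | omega

lemma pcomp_hom (N i : ℕ) (f : (ℕ → Ω) → (ℕ → V) → V) (m : ℕ) (him : i < m)
    (hadd : ∀ (α : ℕ → Ω) (v : ℕ → V) (t : ℕ), t < m → ∀ x y : V,
      f α (Function.update v t (x + y))
        = f α (Function.update v t x) + f α (Function.update v t y))
    (α : ℕ → Ω) (v : ℕ → V) :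
    ∃ φ : V →+ V, ∀ G : (ℕ → Ω) → (ℕ → V) → V,
      pcompF N f G i α v = φ (G (fun t => α (i + t)) (fun t => v (i + t))) := by
  refine ⟨AddMonoidHom.mk' (fun x => f (collapseAt α i N (prodSeg α i (N - 1)))
    (Function.update (fun j => if j < i then v j else v (j + N - 1)) i x))
    (fun x y => hadd _ _ i him x y), fun G => ?_⟩
  simp only [pcompF, AddMonoidHom.mk'_apply, collapseAt_eq_update]

lemma pcomp_right_sum {ι : Type*} (N i : ℕ) (f : (ℕ → Ω) → (ℕ → V) → V) (m : ℕ) (him : i < m)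
    (hadd : ∀ (α : ℕ → Ω) (v : ℕ → V) (t : ℕ), t < m → ∀ x y : V,
      f α (Function.update v t (x + y))
        = f α (Function.update v t x) + f α (Function.update v t y))
    (s : Finset ι) (z : ι → ℤ) (G : ι → ((ℕ → Ω) → (ℕ → V) → V)) (α : ℕ → Ω) (v : ℕ → V) :
    pcompF N f (fun α v => ∑ r ∈ s, z r • G r α v) i α v
      = ∑ r ∈ s, z r • pcompF N f (G r) i α v := by
  obtain ⟨φ, hφ⟩ := pcomp_hom N i f m him hadd α v
  rw [hφ]
  simp only [map_sum, map_zsmul]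
  exact Finset.sum_congr rfl fun r _ => by rw [hφ]

lemma pcomp_right_sub (N i : ℕ) (f : (ℕ → Ω) → (ℕ → V) → V) (m : ℕ) (him : i < m)
    (hadd : ∀ (α : ℕ → Ω) (v : ℕ → V) (t : ℕ), t < m → ∀ x y : V,
      f α (Function.update v t (x + y))
        = f α (Function.update v t x) + f α (Function.update v t y))
    (z : ℤ) (c₁ c₂ : (ℕ → Ω) → (ℕ → V) → V) (α : ℕ → Ω) (v : ℕ → V) :
    pcompF N f (fun α v => c₁ α v - z • c₂ α v) i α v
      = pcompF N f c₁ i α v - z • pcompF N f c₂ i α v := by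
  obtain ⟨φ, hφ⟩ := pcomp_hom N i f m him hadd α v
  rw [hφ, hφ, hφ]
  simp only [map_sub, map_zsmul]

lemma circF_left_sub (M N : ℕ) (z : ℤ) (c₁ c₂ h : (ℕ → Ω) → (ℕ → V) → V)
    (α : ℕ → Ω) (v : ℕ → V) :
    circF M N (fun α v => c₁ α v - z • c₂ α v) h α v
      = circF M N c₁ h α v - z • circF M N c₂ h α v := by
  simp only [circF, pcompF, smul_sub, Finset.sum_sub_distrib, Finset.smul_sum]
  congr 1
  refine Finset.sum_congr rfl fun j _ => ?_
  rw [smul_smul, smul_smul, mul_comm]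

lemma circF_right_sub (P M : ℕ) (hfun : (ℕ → Ω) → (ℕ → V) → V)
    (hadd : ∀ (α : ℕ → Ω) (v : ℕ → V) (t : ℕ), t < P → ∀ x y : V,
      hfun α (Function.update v t (x + y))
        = hfun α (Function.update v t x) + hfun α (Function.update v t y))
    (z : ℤ) (c₁ c₂ : (ℕ → Ω) → (ℕ → V) → V) (α : ℕ → Ω) (v : ℕ → V) :
    circF P M hfun (fun α v => c₁ α v - z • c₂ α v) α v
      = circF P M hfun c₁ α v - z • circF P M hfun c₂ α v := by
  simp only [circF]
  have : ∀ j ∈ Finset.range P,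
      ((-1 : ℤ) ^ (j * (M - 1))) • pcompF M hfun (fun α v => c₁ α v - z • c₂ α v) j α v
        = ((-1 : ℤ) ^ (j * (M - 1))) • pcompF M hfun c₁ j α v
          - z • ((-1 : ℤ) ^ (j * (M - 1))) • pcompF M hfun c₂ j α v := by
    intro j hj
    rw [pcomp_right_sub M j hfun P (Finset.mem_range.mp hj) hadd z c₁ c₂ α v, smul_sub,
      smul_comm]
  rw [Finset.sum_congr rfl this, Finset.sum_sub_distrib, Finset.smul_sum]

end Alg

section ClaimA
variable {V : Type*} [AddCommGroup V]

lemma claimA (m n' p' : ℕ) (f g h : (ℕ → Ω) → (ℕ → V) → V)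
    (hadd : ∀ (α : ℕ → Ω) (v : ℕ → V) (t : ℕ), t < m → ∀ x y : V,
      f α (Function.update v t (x + y))
        = f α (Function.update v t x) + f α (Function.update v t y))
    (α : ℕ → Ω) (v : ℕ → V) :
    circF (m + n') (p' + 1) (circF m (n' + 1) f g) h α v
      - circF m (n' + 1 + p') f (circF (n' + 1) (p' + 1) g h) α v
    = (∑ x ∈ (Finset.range (m + n') ×ˢ Finset.range m).filter
          (fun x => x.2 + n' + 1 ≤ x.1),
        ((-1 : ℤ) ^ (x.1 * p' + x.2 * n')) •
          pcompF (p' + 1) (pcompF (n' + 1) f g x.2) h x.1 α v)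
      + ∑ x ∈ (Finset.range (m + n') ×ˢ Finset.range m).filter
          (fun x => x.1 < x.2),
        ((-1 : ℤ) ^ (x.1 * p' + x.2 * n')) •
          pcompF (p' + 1) (pcompF (n' + 1) f g x.2) h x.1 α v := by
  classical
  set P := Finset.range (m + n') ×ˢ Finset.range m with hP
  set F : ℕ × ℕ → V := fun x => ((-1 : ℤ) ^ (x.1 * p' + x.2 * n')) •
      pcompF (p' + 1) (pcompF (n' + 1) f g x.2) h x.1 α v with hF
  have hE1 : circF (m + n') (p' + 1) (circF m (n' + 1) f g) h α v = ∑ x ∈ P, F x := by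
    rw [hP, Finset.sum_product]
    simp only [hF, circF, pcompF, Finset.smul_sum, Nat.add_sub_cancel, smul_smul, ← pow_add]
  have hE2 : circF m (n' + 1 + p') f (circF (n' + 1) (p' + 1) g h) α v
      = ∑ x ∈ Finset.range m ×ˢ Finset.range (n' + 1),
          ((-1 : ℤ) ^ (x.1 * (n' + p') + x.2 * p')) •
            pcompF (n' + 1 + p') f (pcompF (p' + 1) g h x.2) x.1 α v := by
    rw [Finset.sum_product]
    rw [show circF (n' + 1) (p' + 1) g h = fun α v => ∑ r ∈ Finset.range (n' + 1),
        ((-1 : ℤ) ^ (r * p')) • pcompF (p' + 1) g h r α v from by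
      funext α v; simp only [circF, Nat.add_sub_cancel]]
    simp only [circF, show n' + 1 + p' - 1 = n' + p' by omega, Nat.add_sub_cancel]
    refine Finset.sum_congr rfl fun i hi => ?_
    rw [pcomp_right_sum (n' + 1 + p') i f m (Finset.mem_range.mp hi) hadd
      (Finset.range (n' + 1)) (fun r => (-1 : ℤ) ^ (r * p'))
      (fun r => pcompF (p' + 1) g h r) α v, Finset.smul_sum]
    refine Finset.sum_congr rfl fun r _ => ?_
    rw [smul_smul, ← pow_add]
  have hmid : ∑ x ∈ P.filter (fun x => x.2 ≤ x.1 ∧ x.1 ≤ x.2 + n'), F x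
      = ∑ x ∈ Finset.range m ×ˢ Finset.range (n' + 1),
          ((-1 : ℤ) ^ (x.1 * (n' + p') + x.2 * p')) •
            pcompF (n' + 1 + p') f (pcompF (p' + 1) g h x.2) x.1 α v := by
    refine Finset.sum_nbij' (i := fun x => (x.2, x.1 - x.2)) (j := fun y => (y.1 + y.2, y.1))
      ?_ ?_ ?_ ?_ ?_
    · intro x hx
      simp only [Finset.mem_filter, hP, Finset.mem_product, Finset.mem_range] at hx ⊢
      omega
    · intro y hy
      simp only [Finset.mem_filter, hP, Finset.mem_product, Finset.mem_range] at hy ⊢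
      omega
    · intro x hx
      simp only [Finset.mem_filter, hP, Finset.mem_product, Finset.mem_range] at hx
      have : x.2 + (x.1 - x.2) = x.1 := by omega
      simp [this]
    · intro y _
      simp
    · intro x hx
      simp only [Finset.mem_filter, hP, Finset.mem_product, Finset.mem_range] at hx
      obtain ⟨⟨hx1, hx2⟩, hx3, hx4⟩ := hx
      obtain ⟨a, b⟩ := x
      simp only at hx1 hx2 hx3 hx4 ⊢
      obtain ⟨e, rfl⟩ : ∃ e, a = b + e := ⟨a - b, by omega⟩
      have he : e ≤ n' := by omega
      simp only [hF, Nat.add_sub_cancel_left]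
      rw [pcomp_nested f g h b e n' p' he α v]
      congr 1
      congr 1
      ring
  have hsplitnot : ∑ x ∈ P.filter (fun x => ¬(x.2 ≤ x.1 ∧ x.1 ≤ x.2 + n')), F x
      = (∑ x ∈ P.filter (fun x => x.2 + n' + 1 ≤ x.1), F x)
        + ∑ x ∈ P.filter (fun x => x.1 < x.2), F x := by
    rw [← Finset.sum_filter_add_sum_filter_not
      (P.filter (fun x => ¬(x.2 ≤ x.1 ∧ x.1 ≤ x.2 + n'))) (fun x => x.2 + n' + 1 ≤ x.1) F,
      Finset.filter_filter, Finset.filter_filter]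
    congr 1
    · exact Finset.sum_congr (Finset.filter_congr (fun x _ => by omega)) (fun _ _ => rfl)
    · exact Finset.sum_congr (Finset.filter_congr (fun x _ => by omega)) (fun _ _ => rfl)
  rw [hE1, hE2, ← hmid,
    ← Finset.sum_filter_add_sum_filter_not P (fun x => x.2 ≤ x.1 ∧ x.1 ≤ x.2 + n') F,
    hsplitnot]
  abel

end ClaimA

section ClaimB
variable {V : Type*} [AddCommGroup V]

lemma claimB (m n' p' : ℕ) (f g h : (ℕ → Ω) → (ℕ → V) → V)
    (hg1 : ∀ (α α' : ℕ → Ω) (v v' : ℕ → V), (∀ t, t < n' + 1 → α t = α' t) →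
      (∀ t, t < n' + 1 → v t = v' t) → g α v = g α' v')
    (α : ℕ → Ω) (v : ℕ → V) :
    ∑ x ∈ (Finset.range (m + n') ×ˢ Finset.range m).filter
        (fun x => x.2 + n' + 1 ≤ x.1),
      ((-1 : ℤ) ^ (x.1 * p' + x.2 * n')) •
        pcompF (p' + 1) (pcompF (n' + 1) f g x.2) h x.1 α v
    = ((-1 : ℤ) ^ (n' * p')) •
        ∑ x ∈ (Finset.range (m + p') ×ˢ Finset.range m).filter
          (fun x => x.1 < x.2),
        ((-1 : ℤ) ^ (x.1 * n' + x.2 * p')) •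
          pcompF (n' + 1) (pcompF (p' + 1) f h x.2) g x.1 α v := by
  classical
  rw [Finset.smul_sum]
  refine Finset.sum_nbij' (i := fun x => (x.2, x.1 - n')) (j := fun y => (y.2 + n', y.1))
    ?_ ?_ ?_ ?_ ?_
  · intro x hx
    simp only [Finset.mem_filter, Finset.mem_product, Finset.mem_range] at hx ⊢
    omega
  · intro y hy
    simp only [Finset.mem_filter, Finset.mem_product, Finset.mem_range] at hy ⊢
    omega
  · intro x hx
    simp only [Finset.mem_filter, Finset.mem_product, Finset.mem_range] at hx
    have : x.1 - n' + n' = x.1 := by omega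
    simp [this]
  · intro y hy
    simp only [Finset.mem_filter, Finset.mem_product, Finset.mem_range] at hy
    simp [Nat.add_sub_cancel]
  · intro x hx
    simp only [Finset.mem_filter, Finset.mem_product, Finset.mem_range] at hx
    obtain ⟨⟨hx1, hx2⟩, hx3⟩ := hx
    obtain ⟨a, b⟩ := x
    simp only at hx1 hx2 hx3 ⊢
    obtain ⟨c, rfl⟩ : ∃ c, a = b + n' + 1 + c := ⟨a - b - n' - 1, by omega⟩
    rw [pcomp_parallel f g h b n' p' c hg1 α v,
      show b + n' + 1 + c - n' = b + c + 1 by omega, smul_smul, ← pow_add]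
    congr 2
    ring

end ClaimB

section PreLie
variable {V : Type*} [AddCommGroup V]

lemma preLie (m' n' p' : ℕ) (f g h : (ℕ → Ω) → (ℕ → V) → V)
    (hfadd : ∀ (α : ℕ → Ω) (v : ℕ → V) (t : ℕ), t < m' + 1 → ∀ x y : V,
      f α (Function.update v t (x + y))
        = f α (Function.update v t x) + f α (Function.update v t y))
    (hg1 : ∀ (α α' : ℕ → Ω) (v v' : ℕ → V), (∀ t, t < n' + 1 → α t = α' t) →
      (∀ t, t < n' + 1 → v t = v' t) → g α v = g α' v')
    (hh1 : ∀ (α α' : ℕ → Ω) (v v' : ℕ → V), (∀ t, t < p' + 1 → α t = α' t) →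
      (∀ t, t < p' + 1 → v t = v' t) → h α v = h α' v')
    (α : ℕ → Ω) (v : ℕ → V) :
    circF (m' + 1 + n') (p' + 1) (circF (m' + 1) (n' + 1) f g) h α v
      - circF (m' + 1) (n' + 1 + p') f (circF (n' + 1) (p' + 1) g h) α v
    = ((-1 : ℤ) ^ (n' * p')) •
        (circF (m' + 1 + p') (n' + 1) (circF (m' + 1) (p' + 1) f h) g α v
          - circF (m' + 1) (n' + 1 + p') f (circF (p' + 1) (n' + 1) h g) α v) := by
  have A1 := claimA (m' + 1) n' p' f g h hfadd α v
  have A2 := claimA (m' + 1) p' n' f h g hfadd α v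
  have B1 := claimB (m' + 1) n' p' f g h hg1 α v
  have B2 := claimB (m' + 1) p' n' f h g hh1 α v
  rw [show p' + 1 + n' = n' + 1 + p' by omega] at A2
  rw [A1, A2, B1, B2, smul_add, smul_smul, show p' * n' = n' * p' by ring, ← pow_add,
    Even.neg_one_pow (⟨n' * p', rfl⟩ : Even (n' * p' + n' * p')), one_smul]
  exact add_comm _ _

end PreLie

section Jac
variable {V : Type*} [AddCommGroup V]

lemma jacobi_alg (E1 E2 E3 : ℤ) (h1 : E1 * E1 = 1) (h2 : E2 * E2 = 1) (h3 : E3 * E3 = 1)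
    (Afgh Agfh Aghf Ahgf Ahfg Afhg Bfgh Bgfh Bghf Bhgf Bhfg Bfhg : V)
    (P1 : Afgh - Bfgh = E2 • (Afhg - Bfhg))
    (P2 : Aghf - Bghf = E3 • (Agfh - Bgfh))
    (P3 : Ahfg - Bhfg = E1 • (Ahgf - Bhgf)) :
    E3 • (Afgh - E1 • Agfh - (E3 * E2) • (Bhfg - E1 • Bhgf))
      + E1 • (Aghf - E2 • Ahgf - (E1 * E3) • (Bfgh - E2 • Bfhg))
      + E2 • (Ahfg - E3 • Afhg - (E2 * E1) • (Bghf - E3 • Bgfh)) = 0 := by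
  have key : E3 • (Afgh - E1 • Agfh - (E3 * E2) • (Bhfg - E1 • Bhgf))
      + E1 • (Aghf - E2 • Ahgf - (E1 * E3) • (Bfgh - E2 • Bfhg))
      + E2 • (Ahfg - E3 • Afhg - (E2 * E1) • (Bghf - E3 • Bgfh))
      = E3 • ((Afgh - Bfgh) - E2 • (Afhg - Bfhg))
        + E1 • ((Aghf - Bghf) - E3 • (Agfh - Bgfh))
        + E2 • ((Ahfg - Bhfg) - E1 • (Ahgf - Bhgf)) := by
    rcases Int.isUnit_iff.mp (IsUnit.of_mul_eq_one _ h1) with rfl | rfl <;>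
      rcases Int.isUnit_iff.mp (IsUnit.of_mul_eq_one _ h2) with rfl | rfl <;>
      rcases Int.isUnit_iff.mp (IsUnit.of_mul_eq_one _ h3) with rfl | rfl <;>
      module
  rw [key, P1, P2, P3]
  simp

end Jac


theorem omega_gerstenhaber_graded_lie {V : Type*} [AddCommGroup V] [Module k V]
    (m n p : ℕ) (hm : 1 ≤ m) (hn : 1 ≤ n) (hp : 1 ≤ p)
    (f g h : (ℕ → Ω) → (ℕ → V) → V)
    (hf : IsFamMulti k m f) (hg : IsFamMulti k n g) (hh : IsFamMulti k p h) :
    -- graded antisymmetry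
    (∀ (α : ℕ → Ω) (v : ℕ → V),
      gBracketF m n f g α v
        = -(((-1 : ℤ) ^ ((m - 1) * (n - 1))) • gBracketF n m g f α v)) ∧
    -- graded Jacobi identity
    (∀ (α : ℕ → Ω) (v : ℕ → V),
      ((-1 : ℤ) ^ ((m - 1) * (p - 1))) •
          gBracketF (m + n - 1) p (gBracketF m n f g) h α v
        + ((-1 : ℤ) ^ ((n - 1) * (m - 1))) •
            gBracketF (n + p - 1) m (gBracketF n p g h) f α v
        + ((-1 : ℤ) ^ ((p - 1) * (n - 1))) •
            gBracketF (p + m - 1) n (gBracketF p m h f) g α v = 0) := by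
  obtain ⟨m', rfl⟩ : ∃ m'', m = m'' + 1 := ⟨m - 1, by omega⟩
  obtain ⟨n', rfl⟩ : ∃ n'', n = n'' + 1 := ⟨n - 1, by omega⟩
  obtain ⟨p', rfl⟩ : ∃ p'', p = p'' + 1 := ⟨p - 1, by omega⟩
  constructor
  · intro α v
    rw [gBracket_eq, gBracket_eq]
    simp only [Nat.add_sub_cancel]
    rw [show n' * m' = m' * n' by ring, smul_sub, smul_smul, ← pow_add,
      Even.neg_one_pow (⟨m' * n', rfl⟩ : Even (m' * n' + m' * n')), one_smul, neg_sub]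
  · intro α v
    rw [show m' + 1 + (n' + 1) - 1 = m' + 1 + n' by omega,
      show n' + 1 + (p' + 1) - 1 = n' + 1 + p' by omega,
      show p' + 1 + (m' + 1) - 1 = m' + 1 + p' by omega]
    rw [gBracket_eq (m' + 1 + n') (p' + 1) (gBracketF (m' + 1) (n' + 1) f g) h α v,
      gBracket_eq (n' + 1 + p') (m' + 1) (gBracketF (n' + 1) (p' + 1) g h) f α v,
      gBracket_eq (m' + 1 + p') (n' + 1) (gBracketF (p' + 1) (m' + 1) h f) g α v,
      gBracket_fun_eq (m' + 1) (n' + 1) f g, gBracket_fun_eq (n' + 1) (p' + 1) g h,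
      gBracket_fun_eq (p' + 1) (m' + 1) h f]
    rw [circF_left_sub, circF_left_sub, circF_left_sub,
      circF_right_sub (p' + 1) (m' + 1 + n') h hh.2.1 _ _ _ α v,
      circF_right_sub (m' + 1) (n' + 1 + p') f hf.2.1 _ _ _ α v,
      circF_right_sub (n' + 1) (m' + 1 + p') g hg.2.1 _ _ _ α v]
    simp only [Nat.add_sub_cancel]
    rw [show m' + 1 + n' - 1 = m' + n' by omega, show n' + 1 + p' - 1 = n' + p' by omega,
      show m' + 1 + p' - 1 = m' + p' by omega]
    rw [show (m' + n') * p' = m' * p' + n' * p' by ring,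
      show (n' + p') * m' = m' * n' + m' * p' by ring,
      show (m' + p') * n' = n' * p' + m' * n' by ring]
    rw [pow_add, pow_add, pow_add]
    rw [show n' * m' = m' * n' by ring, show p' * n' = n' * p' by ring,
      show p' * m' = m' * p' by ring]
    have P1 := preLie m' n' p' f g h hf.2.1 hg.1 hh.1 α v
    have P2 := preLie n' p' m' g h f hg.2.1 hh.1 hf.1 α v
    have P3 := preLie p' m' n' h f g hh.2.1 hf.1 hg.1 α v
    rw [show n' + 1 + m' = m' + 1 + n' by omega, show p' + 1 + m' = m' + 1 + p' by omega,
      show p' * m' = m' * p' by ring] at P2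
    rw [show p' + 1 + n' = n' + 1 + p' by omega, show p' + 1 + m' = m' + 1 + p' by omega] at P3
    have h1 : ((-1 : ℤ) ^ (m' * n')) * ((-1 : ℤ) ^ (m' * n')) = 1 := by
      rw [← pow_add]; exact Even.neg_one_pow ⟨m' * n', rfl⟩
    have h2 : ((-1 : ℤ) ^ (n' * p')) * ((-1 : ℤ) ^ (n' * p')) = 1 := by
      rw [← pow_add]; exact Even.neg_one_pow ⟨n' * p', rfl⟩
    have h3 : ((-1 : ℤ) ^ (m' * p')) * ((-1 : ℤ) ^ (m' * p')) = 1 := by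
      rw [← pow_add]; exact Even.neg_one_pow ⟨m' * p', rfl⟩
    exact jacobi_alg _ _ _ h1 h2 h3 _ _ _ _ _ _ _ _ _ _ _ _ P1 P2 P3
end

section
/- Let A and M be k-vector spaces. Say that f ∈ Hom_Ω((A⊕M)^{⊗(k+l+1)}, A⊕M) has bidegree k|l if, for every label (α₁,…,α_{k+l+1}) ∈ Ω^{k+l+1} and every way of feeding f a pure tensor in which some inputs lie in A ⊆ A⊕M and the remaining inputs lie in M ⊆ A⊕M, the A-component of the output vanishes unless exactly l inputs lie in M, and the M-component of the output vanishes unless exactly l+1 inputs lie in M. Then for f of bidegree k|l and g of bidegree p|q, the Ω-Gerstenhaber bracket [f, g]_Ω, an element of Hom_Ω((A⊕M)^{⊗(k+l+p+q+1)}, A⊕M), has bidegree (k+p)|(l+q). -/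
variable {k : Type*} [Field k] [CharZero k]
variable {Ω : Type*} [Semigroup Ω]

/-- `f`, a collection of `N`-ary maps on `A ⊕ M`, "has `l` inputs in `M` for its
`A`-part and `l+1` inputs in `M` for its `M`-part":  for every label and every
pure-tensor input whose entries at the positions of `S` lie in `M` and at the
remaining positions (among the first `N`) lie in `A`, the `A`-component of the
output vanishes unless `S.card = l`, and the `M`-component vanishes unless
`S.card = l + 1`.  For `N = k + l + 1` this says `f` has bidegree `k|l`. -/
def HasBidegree {Ω A M : Type*} [Zero A] [Zero M]
    (N l : ℕ) (f : (ℕ → Ω) → (ℕ → A × M) → A × M) : Prop :=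
  ∀ (S : Finset ℕ), S ⊆ Finset.range N →
    ∀ (α : ℕ → Ω) (v : ℕ → A × M),
      (∀ j ∈ S, (v j).1 = 0) →
      (∀ j ∈ Finset.range N \ S, (v j).2 = 0) →
      (S.card ≠ l → (f α v).1 = 0) ∧ (S.card ≠ l + 1 → (f α v).2 = 0)

lemma apply_update_zero (k : Type*) [Field k] {Ω V W : Type*}
    [AddCommGroup V] [Module k V] [AddCommGroup W] [Module k W]
    {n : ℕ} {f : (ℕ → Ω) → (ℕ → V) → W} (hf : IsFamMulti k n f)
    (α : ℕ → Ω) (v : ℕ → V) {t : ℕ} (ht : t < n) :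
    f α (Function.update v t 0) = 0 := by
  have h := hf.2.2 α v t ht (0 : k) 0
  simpa using h

lemma pcomp_bidegree
    {A M : Type*} [AddCommGroup A] [Module k A] [AddCommGroup M] [Module k M]
    (m n l q : ℕ) (hn : 1 ≤ n)
    (f g : (ℕ → Ω) → (ℕ → A × M) → A × M)
    (hfmul : IsFamMulti k m f)
    (hf : HasBidegree m l f) (hg : HasBidegree n q g)
    (i : ℕ) (hi : i < m) :
    HasBidegree (m + n - 1) (l + q) (pcompF n f g i) := by
  classical
  intro S hS α v hA hM
  set w : A × M := g (fun t => α (i + t)) (fun t => v (i + t)) with hw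
  set T : Finset ℕ := (Finset.range n).filter (fun t => i + t ∈ S) with hT
  have hTsub : T ⊆ Finset.range n := Finset.filter_subset _ _
  have hSr : ∀ j ∈ S, j < m + n - 1 := fun j hj => Finset.mem_range.mp (hS hj)
  have hTA : ∀ t ∈ T, (v (i + t)).1 = 0 := by
    intro t ht
    exact hA _ (Finset.mem_filter.mp ht).2
  have hTM : ∀ t ∈ Finset.range n \ T, (v (i + t)).2 = 0 := by
    intro t ht
    rw [Finset.mem_sdiff, Finset.mem_range] at ht
    apply hM
    rw [Finset.mem_sdiff, Finset.mem_range]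
    refine ⟨by omega, fun hmem => ht.2 ?_⟩
    rw [hT, Finset.mem_filter, Finset.mem_range]
    exact ⟨ht.1, hmem⟩
  obtain ⟨hw1, hw2⟩ := hg T hTsub (fun t => α (i + t)) (fun t => v (i + t)) hTA hTM
  rw [← hw] at hw1 hw2
  set α' : ℕ → Ω := collapseAt α i n (prodSeg α i (n - 1)) with hα'
  set u : ℕ → A × M := collapseAt v i n w with hu
  have hp : pcompF n f g i α v = f α' u := rfl
  have hui : u i = w := by simp [hu, collapseAt]
  have hulef : ∀ j, j < i → u j = v j := by
    intro j hj; simp [hu, collapseAt, hj]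
  have hugt : ∀ j, i < j → u j = v (j + n - 1) := by
    intro j hj
    simp only [hu, collapseAt]
    rw [if_neg (by omega), if_neg (by omega)]
  -- split f α' u into pure-sector pieces
  have hue : Function.update u i w = u := by
    rw [← hui]; exact Function.update_eq_self i u
  have hsplit : f α' u
      = f α' (Function.update u i ((w.1, (0 : M))))
        + f α' (Function.update u i (((0 : A), w.2))) := by
    have h := hfmul.2.1 α' u i hi (w.1, (0 : M)) ((0 : A), w.2)
    rw [show (w.1, (0 : M)) + ((0 : A), w.2) = w from by ext <;> simp] at h
    rw [hue] at h
    exact h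
  -- the outer index set for the first piece
  set S1 : Finset ℕ :=
    S.filter (fun j => j < i) ∪ (S.filter (fun j => i + n ≤ j)).image (fun j => j - n + 1)
    with hS1
  have hmemS1 : ∀ j, j ∈ S1 ↔ (j < i ∧ j ∈ S) ∨ (i < j ∧ j + n - 1 ∈ S) := by
    intro j
    simp only [hS1, Finset.mem_union, Finset.mem_filter, Finset.mem_image]
    constructor
    · rintro (⟨h, hj⟩ | ⟨a, ⟨ha, h⟩, rfl⟩)
      · exact Or.inl ⟨hj, h⟩
      · refine Or.inr ⟨by omega, ?_⟩
        rw [show a - n + 1 + n - 1 = a from by omega]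
        exact ha
    · rintro (⟨h1, h2⟩ | ⟨h1, h2⟩)
      · exact Or.inl ⟨h2, h1⟩
      · exact Or.inr ⟨j + n - 1, ⟨h2, by omega⟩, by omega⟩
  have hiS1 : i ∉ S1 := by
    rw [hmemS1]; rintro (⟨h, _⟩ | ⟨h, _⟩) <;> omega
  have hS1sub : S1 ⊆ Finset.range m := by
    intro j hj
    rw [hmemS1] at hj
    rw [Finset.mem_range]
    rcases hj with ⟨h1, _⟩ | ⟨h1, h2⟩
    · omega
    · have := hSr _ h2; omega
  -- card computations
  have cardS1 : S1.card
      = (S.filter (fun j => j < i)).card + (S.filter (fun j => i + n ≤ j)).card := by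
    rw [hS1, Finset.card_union_of_disjoint, Finset.card_image_of_injOn]
    · intro a ha b hb hab
      simp only [Finset.coe_filter, Set.mem_setOf_eq] at ha hb
      have hab' : a - n + 1 = b - n + 1 := hab
      omega
    · rw [Finset.disjoint_left]
      intro a ha hb
      rw [Finset.mem_filter] at ha
      rw [Finset.mem_image] at hb
      obtain ⟨b, hb, rfl⟩ := hb
      rw [Finset.mem_filter] at hb
      omega
  have cardT : T.card = (S.filter (fun j => i ≤ j ∧ j < i + n)).card := by
    apply Finset.card_bij (fun t _ => i + t)
    · intro t ht
      rw [hT, Finset.mem_filter, Finset.mem_range] at ht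
      rw [Finset.mem_filter]
      exact ⟨ht.2, by omega, by omega⟩
    · intro a _ b _ h; omega
    · intro b hb
      rw [Finset.mem_filter] at hb
      refine ⟨b - i, ?_, by omega⟩
      rw [hT, Finset.mem_filter, Finset.mem_range]
      constructor
      · omega
      · rw [show i + (b - i) = b from by omega]; exact hb.1
  have cardS : (S.filter (fun j => j < i)).card
      + (S.filter (fun j => i ≤ j ∧ j < i + n)).card
      + (S.filter (fun j => i + n ≤ j)).card = S.card := by
    have h1 := Finset.card_filter_add_card_filter_not (s := S) (p := fun j => j < i)
    have h2 := Finset.card_filter_add_card_filter_not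
      (s := S.filter (fun j => ¬ j < i)) (p := fun j => j < i + n)
    rw [Finset.filter_filter, Finset.filter_filter] at h2
    have e1 : S.filter (fun j => ¬ j < i ∧ j < i + n)
        = S.filter (fun j => i ≤ j ∧ j < i + n) := by
      apply Finset.filter_congr; intro j _; constructor <;> (intro h; omega)
    have e2 : S.filter (fun j => ¬ j < i ∧ ¬ j < i + n)
        = S.filter (fun j => i + n ≤ j) := by
      apply Finset.filter_congr; intro j _; constructor <;> (intro h; omega)
    rw [e1, e2] at h2
    omega
  have hcards : S1.card + T.card = S.card := by omega
  -- hypotheses of hf for the first piece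
  have cond1A : ∀ j ∈ S1, ((Function.update u i ((w.1, (0:M)))) j).1 = 0 := by
    intro j hj
    have hji : j ≠ i := fun h => hiS1 (h ▸ hj)
    rw [Function.update_apply, if_neg hji]
    rw [hmemS1] at hj
    rcases hj with ⟨h1, h2⟩ | ⟨h1, h2⟩
    · rw [hulef j h1]; exact hA _ h2
    · rw [hugt j h1]; exact hA _ h2
  have cond1M : ∀ j ∈ Finset.range m \ S1, ((Function.update u i ((w.1, (0:M)))) j).2 = 0 := by
    intro j hj
    rw [Finset.mem_sdiff, Finset.mem_range] at hj
    by_cases hji : j = i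
    · subst hji; rw [Function.update_self]
    · rw [Function.update_apply, if_neg hji]
      have hj2 := hj.2
      rw [hmemS1] at hj2
      push_neg at hj2
      rcases Nat.lt_or_ge j i with hlt | hge
      · rw [hulef j hlt]
        apply hM
        rw [Finset.mem_sdiff, Finset.mem_range]
        exact ⟨by omega, hj2.1 hlt⟩
      · have hgt : i < j := by omega
        rw [hugt j hgt]
        apply hM
        rw [Finset.mem_sdiff, Finset.mem_range]
        exact ⟨by omega, hj2.2 hgt⟩
  obtain ⟨h1A, h1M⟩ := hf S1 hS1sub α' _ cond1A cond1M
  -- second piece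
  set S2 : Finset ℕ := insert i S1 with hS2
  have cardS2 : S2.card = S1.card + 1 := Finset.card_insert_of_notMem hiS1
  have hS2sub : S2 ⊆ Finset.range m := by
    intro j hj
    rw [hS2, Finset.mem_insert] at hj
    rcases hj with rfl | hj
    · exact Finset.mem_range.mpr hi
    · exact hS1sub hj
  have cond2A : ∀ j ∈ S2, ((Function.update u i (((0:A), w.2))) j).1 = 0 := by
    intro j hj
    by_cases hji : j = i
    · subst hji; rw [Function.update_self]
    · rw [Function.update_apply, if_neg hji]
      rw [hS2, Finset.mem_insert] at hj
      rcases hj with rfl | hj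
      · exact absurd rfl hji
      · rw [hmemS1] at hj
        rcases hj with ⟨h1, h2⟩ | ⟨h1, h2⟩
        · rw [hulef j h1]; exact hA _ h2
        · rw [hugt j h1]; exact hA _ h2
  have cond2M : ∀ j ∈ Finset.range m \ S2, ((Function.update u i (((0:A), w.2))) j).2 = 0 := by
    intro j hj
    rw [Finset.mem_sdiff, Finset.mem_range, hS2, Finset.mem_insert] at hj
    push_neg at hj
    obtain ⟨hjm, hji, hj2⟩ := hj
    rw [Function.update_apply, if_neg hji]
    rw [hmemS1] at hj2
    push_neg at hj2
    rcases Nat.lt_or_ge j i with hlt | hge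
    · rw [hulef j hlt]
      apply hM
      rw [Finset.mem_sdiff, Finset.mem_range]
      exact ⟨by omega, hj2.1 hlt⟩
    · have hgt : i < j := by omega
      rw [hugt j hgt]
      apply hM
      rw [Finset.mem_sdiff, Finset.mem_range]
      exact ⟨by omega, hj2.2 hgt⟩
  obtain ⟨h2A, h2M⟩ := hf S2 hS2sub α' _ cond2A cond2M
  -- vanishing of pieces when the inner output vanishes
  have hz1 : w.1 = 0 → f α' (Function.update u i ((w.1, (0:M)))) = 0 := by
    intro h
    rw [h, show (((0:A), (0:M)) : A × M) = 0 from rfl]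
    exact apply_update_zero k hfmul α' u hi
  have hz2 : w.2 = 0 → f α' (Function.update u i (((0:A), w.2))) = 0 := by
    intro h
    rw [h, show (((0:A), (0:M)) : A × M) = 0 from rfl]
    exact apply_update_zero k hfmul α' u hi
  constructor
  · intro hcard
    rw [hp, hsplit, Prod.fst_add]
    have e1 : (f α' (Function.update u i ((w.1, (0:M))))).1 = 0 := by
      by_cases hq : T.card = q
      · exact h1A (by omega)
      · rw [hz1 (hw1 hq)]; rfl
    have e2 : (f α' (Function.update u i (((0:A), w.2)))).1 = 0 := by
      by_cases hq : T.card = q + 1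
      · exact h2A (by omega)
      · rw [hz2 (hw2 hq)]; rfl
    rw [e1, e2, add_zero]
  · intro hcard
    rw [hp, hsplit, Prod.snd_add]
    have e1 : (f α' (Function.update u i ((w.1, (0:M))))).2 = 0 := by
      by_cases hq : T.card = q
      · exact h1M (by omega)
      · rw [hz1 (hw1 hq)]; rfl
    have e2 : (f α' (Function.update u i (((0:A), w.2)))).2 = 0 := by
      by_cases hq : T.card = q + 1
      · exact h2M (by omega)
      · rw [hz2 (hw2 hq)]; rfl
    rw [e1, e2, add_zero]

/- STATEMENT 7: if `f` has bidegree `k|l` (so arity `k+l+1`) and `g` has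
bidegree `p|q` (so arity `p+q+1`), then the Ω-Gerstenhaber bracket `[f,g]_Ω`
(of arity `k+l+p+q+1`) has bidegree `(k+p)|(l+q)`. -/

theorem gBracket_bidegree
    {A M : Type*} [AddCommGroup A] [Module k A] [AddCommGroup M] [Module k M]
    (kk ll pp qq : ℕ)
    (f g : (ℕ → Ω) → (ℕ → A × M) → A × M)
    (hfmul : IsFamMulti k (kk + ll + 1) f) (hgmul : IsFamMulti k (pp + qq + 1) g)
    (hf : HasBidegree (kk + ll + 1) ll f) (hg : HasBidegree (pp + qq + 1) qq g) :
    HasBidegree (kk + ll + pp + qq + 1) (ll + qq)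
      (gBracketF (kk + ll + 1) (pp + qq + 1) f g) := by
  intro S hS α v hA hM
  have hN1 : (kk + ll + 1) + (pp + qq + 1) - 1 = kk + ll + pp + qq + 1 := by omega
  have hN2 : (pp + qq + 1) + (kk + ll + 1) - 1 = kk + ll + pp + qq + 1 := by omega
  have H1 := pcomp_bidegree (kk + ll + 1) (pp + qq + 1) ll qq (by omega) f g hfmul hf hg
  have H2 := pcomp_bidegree (pp + qq + 1) (kk + ll + 1) qq ll (by omega) g f hgmul hg hf
  constructor
  · intro hcard
    have Z1 : ∀ i ∈ Finset.range (kk + ll + 1), (pcompF (pp + qq + 1) f g i α v).1 = 0 := by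
      intro i hi
      exact ((H1 i (Finset.mem_range.mp hi) S (by rw [hN1]; exact hS) α v hA
        (by rw [hN1]; exact hM)).1 (by omega))
    have Z2 : ∀ i ∈ Finset.range (pp + qq + 1), (pcompF (kk + ll + 1) g f i α v).1 = 0 := by
      intro i hi
      exact ((H2 i (Finset.mem_range.mp hi) S (by rw [hN2]; exact hS) α v hA
        (by rw [hN2]; exact hM)).1 (by omega))
    simp only [gBracketF, Prod.fst_sub, Prod.smul_fst, Prod.fst_sum]
    rw [Finset.sum_eq_zero (fun i hi => by rw [Z1 i hi, smul_zero]),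
      Finset.sum_eq_zero (fun i hi => by rw [Z2 i hi, smul_zero]), smul_zero, sub_zero]
  · intro hcard
    have Z1 : ∀ i ∈ Finset.range (kk + ll + 1), (pcompF (pp + qq + 1) f g i α v).2 = 0 := by
      intro i hi
      exact ((H1 i (Finset.mem_range.mp hi) S (by rw [hN1]; exact hS) α v hA
        (by rw [hN1]; exact hM)).2 (by omega))
    have Z2 : ∀ i ∈ Finset.range (pp + qq + 1), (pcompF (kk + ll + 1) g f i α v).2 = 0 := by
      intro i hi
      exact ((H2 i (Finset.mem_range.mp hi) S (by rw [hN2]; exact hS) α v hA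
        (by rw [hN2]; exact hM)).2 (by omega))
    simp only [gBracketF, Prod.snd_sub, Prod.smul_snd, Prod.snd_sum]
    rw [Finset.sum_eq_zero (fun i hi => by rw [Z1 i hi, smul_zero]),
      Finset.sum_eq_zero (fun i hi => by rw [Z2 i hi, smul_zero]), smul_zero, sub_zero]
end

section
/- Let A and M be k-vector spaces equipped with bilinear maps μ : A × A → A, l : A × M → M, r : M × A → M. Define △ ∈ Hom_Ω((A⊕M)^{⊗2}, A⊕M) by △_{α,β}((a,u),(b,v)) := (μ(a,b), l(a,v) + r(u,b)) for all α, β ∈ Ω. Then [△, △]_Ω = 0 if and only if μ is associative and (M, l, r) is a bimodule over (A, μ), i.e., μ(μ(a,b),c) = μ(a,μ(b,c)), l(μ(a,b),u) = l(a,l(b,u)), r(l(a,u),b) = l(a,r(u,b)), and r(r(u,a),b) = r(u,μ(a,b)) for all a, b, c ∈ A and u ∈ M. -/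
variable {k : Type*} [Field k] [CharZero k]
variable {Ω : Type*} [Semigroup Ω]

/-- The element `△ ∈ Hom_Ω((A⊕M)^{⊗2}, A⊕M)` determined by bilinear maps
`μ : A × A → A`, `l : A × M → M`, `r : M × A → M`:
`△_{α,β}((a,u),(b,v)) = (μ(a,b), l(a,v) + r(u,b))` for all labels. -/
def triangleMap {Ω A M : Type*} [AddCommGroup A] [AddCommGroup M]
    {k : Type*} [Field k] [Module k A] [Module k M]
    (μ : A →ₗ[k] A →ₗ[k] A) (lop : A →ₗ[k] M →ₗ[k] M) (rop : M →ₗ[k] A →ₗ[k] M) :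
    (ℕ → Ω) → (ℕ → A × M) → A × M :=
  fun _ v => (μ (v 0).1 (v 1).1, lop (v 0).1 (v 1).2 + rop (v 0).2 (v 1).1)

/- STATEMENT 8: `[△,△]_Ω = 0` if and only if `μ` is associative and
`(M, l, r)` is a bimodule over `(A, μ)`. -/

lemma two_cancel_aux {k V : Type*} [Field k] [CharZero k] [AddCommGroup V] [Module k V]
    {x y : V} (h : x + -y - (y + -x) = 0) : x = y := by
  have h2 : (2 : k) • (x - y) = x + -y - (y + -x) := by
    rw [two_smul]; abel
  rw [h] at h2
  have := (smul_eq_zero.mp h2).resolve_left (by norm_num)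
  exact sub_eq_zero.mp this

theorem triangle_square_zero_iff_assoc_bimodule [Nonempty Ω]
    {A M : Type*} [AddCommGroup A] [Module k A] [AddCommGroup M] [Module k M]
    (μ : A →ₗ[k] A →ₗ[k] A) (lop : A →ₗ[k] M →ₗ[k] M) (rop : M →ₗ[k] A →ₗ[k] M) :
    (∀ (α : ℕ → Ω) (v : ℕ → A × M),
        gBracketF 2 2 (triangleMap (Ω := Ω) μ lop rop)
          (triangleMap (Ω := Ω) μ lop rop) α v = 0)
      ↔ ((∀ a b c : A, μ (μ a b) c = μ a (μ b c)) ∧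
         (∀ (a b : A) (u : M), lop (μ a b) u = lop a (lop b u)) ∧
         (∀ (a : A) (u : M) (b : A), rop (lop a u) b = lop a (rop u b)) ∧
         (∀ (u : M) (a b : A), rop (rop u a) b = rop u (μ a b))) := by
  simp only [gBracketF, pcompF, collapseAt, triangleMap, Finset.sum_range_succ,
    Finset.sum_range_zero]
  norm_num
  constructor
  · intro h
    refine ⟨?_, ?_, ?_, ?_⟩
    · intro a b c
      have := (h (fun n => if n = 0 then (a, 0) else if n = 1 then (b, 0) else (c, 0))).1
      simp at this
      exact two_cancel_aux (k := k) this
    · intro a b u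
      have := (h (fun n => if n = 0 then (a, 0) else if n = 1 then (b, 0) else (0, u))).2
      simp at this
      exact two_cancel_aux (k := k) this
    · intro a u b
      have := (h (fun n => if n = 0 then (a, 0) else if n = 1 then (0, u) else (b, 0))).2
      simp at this
      exact two_cancel_aux (k := k) this
    · intro u a b
      have := (h (fun n => if n = 0 then ((0 : A), u) else if n = 1 then (a, 0) else (b, 0))).2
      simp at this
      exact two_cancel_aux (k := k) this
  · rintro ⟨h1, h2, h3, h4⟩ v
    constructor
    · rw [h1]; abel
    · rw [h2, h3, h4]; abel
end
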